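/- arXiv:0804.0724 — 2 statements merged into one kernel-verified Lean document; each statement's English description precedes it below -/
import Mathlib

section
/- For k ≥ 2 and c ≥ 2, if every c-coloring of {1,...,n} contains a monochromatic k-term arithmetic progression, then ⌈log_c(n²/k)⌉ + 1 ≥ k; equivalently n² · c ≥ c^(k-1) · k (up to ceiling), giving n > √k · c^(k/2 − 1). -/
/-- A coloring χ contains a monochromatic k-term arithmetic progression
within {1,...,n}. -/
def hasMonoAP (c k n : ℕ) (χ : ℕ → Fin c) : Prop :=
  ∃ a d : ℕ, 1 ≤ a ∧ 1 ≤ d ∧ a + (k - 1) * d ≤ n ∧ ∀ i < k, χ (a + i * d) = χ a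

/-- The van der Waerden number w(k;c): the least n such that every c-coloring of
{1,...,n} contains a monochromatic k-term arithmetic progression. -/
noncomputable def vdW (k c : ℕ) : ℕ := sInf {n | ∀ χ : ℕ → Fin c, hasMonoAP c k n χ}

/-! A colouring of `[1, n]` with a monochromatic `k`-term progression is determined by the
progression, its colour and its values off the progression, so `c ^ n ≤ #P * c * c ^ (n - k)`
for the set `P` of progressions in `[1, n]`. As `(k - 1) * #P ≤ n * (n - 1)`, this yields
`k * c ^ (k - 2) < (k - 1) * c ^ (k - 1) ≤ n * (n - 1) < n ^ 2`,
i.e. `k - 2 < log_c (n ^ 2 / k)`. -/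

open Finset

section Counting

variable {α β : Type*} [Fintype α] [DecidableEq α] [Fintype β] [DecidableEq β]

lemma card_filter_forall_mem_apply_eq (s : Finset α) (b : β) :
    #{f : α → β | ∀ x ∈ s, f x = b} = Fintype.card β ^ (Fintype.card α - #s) := by
  have hpi : ({f : α → β | ∀ x ∈ s, f x = b} : Finset (α → β)) =
      Fintype.piFinset fun x => if x ∈ s then {b} else univ := by
    ext f
    simp only [mem_filter, mem_univ, true_and, Fintype.mem_piFinset]
    refine forall_congr' fun x => ?_
    split_ifs <;> simp [*]
  simp only [hpi, Fintype.card_piFinset, apply_ite card, card_singleton, card_univ, prod_ite,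
    prod_const_one, one_mul, prod_const, filter_not, card_univ_sdiff, filter_mem_eq_inter,
    univ_inter]

lemma card_pow_le_of_forall_exists_const {ι : Type*} (P : Finset ι) (S : ι → Finset α) {k : ℕ}
    (hS : ∀ p ∈ P, k ≤ #(S p)) (h : ∀ f : α → β, ∃ p ∈ P, ∃ b, ∀ x ∈ S p, f x = b) :
    Fintype.card β ^ Fintype.card α ≤
      #P * Fintype.card β * Fintype.card β ^ (Fintype.card α - k) := by
  have hcover : (univ : Finset (α → β)) ⊆
      (P ×ˢ univ).biUnion fun pb => {f | ∀ x ∈ S pb.1, f x = pb.2} := by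
    intro f _
    obtain ⟨p, hp, b, hb⟩ := h f
    exact mem_biUnion.2 ⟨(p, b), mem_product.2 ⟨hp, mem_univ b⟩, by simpa using hb⟩
  calc Fintype.card β ^ Fintype.card α = #(univ : Finset (α → β)) := by simp
    _ ≤ ∑ pb ∈ P ×ˢ univ, #{f : α → β | ∀ x ∈ S pb.1, f x = pb.2} :=
      (card_le_card hcover).trans card_biUnion_le
    _ ≤ ∑ _pb ∈ P ×ˢ (univ : Finset β), Fintype.card β ^ (Fintype.card α - k) := by
      refine sum_le_sum fun pb hpb => ?_
      rw [card_filter_forall_mem_apply_eq]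
      have := hS _ (mem_product.1 hpb).1
      exact Nat.pow_le_pow_right (Fintype.card_pos_iff.2 ⟨pb.2⟩) (by omega)
    _ = #P * Fintype.card β * Fintype.card β ^ (Fintype.card α - k) := by
      simp [card_product]

end Counting

def arithProg (a d k : ℕ) : Finset ℕ := (range k).image (a + · * d)

lemma card_arithProg (a k : ℕ) {d : ℕ} (hd : 0 < d) : #(arithProg a d k) = k := by
  rw [arithProg, card_image_of_injective _ fun i j hij => by
    simpa [hd.ne'] using hij, card_range]

lemma arithProg_subset_Icc {a d k n : ℕ} (ha : 1 ≤ a) (hn : a + (k - 1) * d ≤ n) :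
    arithProg a d k ⊆ Icc 1 n := by
  intro x hx
  obtain ⟨i, hi, rfl⟩ := mem_image.1 hx
  have : i * d ≤ (k - 1) * d := Nat.mul_le_mul_right d (by simp at hi; omega)
  simp only [mem_Icc]
  omega

lemma le_of_hasMonoAP {c k n : ℕ} {χ : ℕ → Fin c} (h : hasMonoAP c k n χ) : k ≤ n := by
  obtain ⟨a, d, ha, hd, hn, -⟩ := h
  have : k - 1 ≤ (k - 1) * d := Nat.le_mul_of_pos_right _ hd
  omega

def apParams (n k : ℕ) : Finset (ℕ × ℕ) :=
  {p ∈ Icc 1 n ×ˢ Icc 1 n | p.1 + (k - 1) * p.2 ≤ n}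

lemma sub_one_mul_card_apParams_le (n k : ℕ) : (k - 1) * #(apParams n k) ≤ n * (n - 1) := by
  rcases Nat.eq_zero_or_pos (k - 1) with hk | hk
  · simp [hk]
  set m := (n - 1) / (k - 1)
  have hsub : apParams n k ⊆ Icc 1 n ×ˢ Icc 1 m := by
    intro p hp
    simp only [apParams, mem_filter, mem_product, mem_Icc] at hp ⊢
    obtain ⟨⟨⟨ha, -⟩, hd, -⟩, hn⟩ := hp
    refine ⟨⟨ha, by omega⟩, hd, (Nat.le_div_iff_mul_le hk).2 ?_⟩
    rw [mul_comm]
    omega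
  calc (k - 1) * #(apParams n k) ≤ (k - 1) * (n * m) := by
        gcongr
        simpa using card_le_card hsub
    _ = n * ((n - 1) / (k - 1) * (k - 1)) := by ring
    _ ≤ n * (n - 1) := by gcongr; exact Nat.div_mul_le_self _ _

lemma pow_le_card_apParams_mul {c k n : ℕ} (hc : 0 < c) (hk : 2 ≤ k)
    (h : ∀ χ : ℕ → Fin c, hasMonoAP c k n χ) :
    c ^ n ≤ #(apParams n k) * c * c ^ (n - k) := by
  have hcount := card_pow_le_of_forall_exists_const (α := Icc 1 n) (β := Fin c) (k := k)
    (apParams n k) (fun p => (arithProg p.1 p.2 k).subtype (· ∈ Icc 1 n)) ?_ ?_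
  · simpa using hcount
  · rintro ⟨a, d⟩ hp
    simp only [apParams, mem_filter, mem_product, mem_Icc] at hp
    rw [card_subtype, filter_true_of_mem fun x hx => arithProg_subset_Icc hp.1.1.1 hp.2 hx,
      card_arithProg _ _ hp.1.2.1]
  · intro f
    set χ : ℕ → Fin c := fun i => if hi : i ∈ Icc 1 n then f ⟨i, hi⟩ else ⟨0, hc⟩
    obtain ⟨a, d, ha, hd, hn, hmono⟩ := h χ
    refine ⟨(a, d), ?_, χ a, fun x hx => ?_⟩
    · have : d ≤ (k - 1) * d := Nat.le_mul_of_pos_left d (by omega)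
      simp only [apParams, mem_filter, mem_product, mem_Icc]
      omega
    · obtain ⟨i, hi, hx⟩ := mem_image.1 (mem_subtype.1 hx)
      rw [← hmono i (mem_range.1 hi), hx]
      simp only [χ, dif_pos x.2]

lemma sub_one_mul_pow_le_of_forall_hasMonoAP {c k n : ℕ} (hc : 0 < c) (hk : 2 ≤ k)
    (h : ∀ χ : ℕ → Fin c, hasMonoAP c k n χ) : (k - 1) * c ^ (k - 1) ≤ n * (n - 1) := by
  have hkn : k ≤ n := le_of_hasMonoAP (h fun _ => ⟨0, hc⟩)
  have hcard : c ^ (k - 1) ≤ #(apParams n k) := by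
    have hsplit : c ^ n = c ^ (k - 1) * c * c ^ (n - k) := by
      rw [← pow_succ, ← pow_add]
      congr 1
      omega
    have := pow_le_card_apParams_mul hc hk h
    rw [hsplit] at this
    exact Nat.le_of_mul_le_mul_right (Nat.le_of_mul_le_mul_right this (by positivity)) hc
  calc (k - 1) * c ^ (k - 1) ≤ (k - 1) * #(apParams n k) := by gcongr
    _ ≤ n * (n - 1) := sub_one_mul_card_apParams_le n k

lemma mul_pow_sub_two_lt_sq {c k n : ℕ} (hc : 2 ≤ c) (hk : 2 ≤ k)
    (h : (k - 1) * c ^ (k - 1) ≤ n * (n - 1)) : k * c ^ (k - 2) < n ^ 2 := by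
  obtain ⟨j, rfl⟩ : ∃ j, k = j + 2 := ⟨k - 2, by omega⟩
  simp only [Nat.add_sub_cancel, show j + 2 - 1 = j + 1 by omega] at h ⊢
  have hn : 0 < n := Nat.pos_of_ne_zero fun hn => by simp [hn] at h; omega
  calc (j + 2) * c ^ j ≤ (j + 1) * 2 * c ^ j := by gcongr; omega
    _ ≤ (j + 1) * c * c ^ j := by gcongr
    _ = (j + 1) * c ^ (j + 1) := by ring
    _ ≤ n * (n - 1) := h
    _ < n ^ 2 := by rw [sq]; exact Nat.mul_lt_mul_of_pos_left (by omega) hn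

lemma le_ceil_logb_add_one {b x : ℝ} (hb : 1 < b) {k : ℕ} (hk : 2 ≤ k) (h : b ^ (k - 2) < x) :
    (k : ℤ) ≤ ⌈Real.logb b x⌉ + 1 := by
  have hx : 0 < x := (pow_pos (by linarith) _).trans h
  have hlog : ((k - 2 : ℕ) : ℝ) < Real.logb b x :=
    (Real.lt_logb_iff_rpow_lt hb hx).2 (by rwa [Real.rpow_natCast])
  have := Int.lt_ceil.2 (by exact_mod_cast hlog : (((k - 2 : ℕ) : ℤ) : ℝ) < Real.logb b x)
  omega

/-- If every c-coloring of {1,...,n} contains a monochromatic k-term arithmetic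
progression, then ⌈log_c(n²/k)⌉ + 1 ≥ k. -/
theorem ceil_logc_bound (k c n : ℕ) (hk : 2 ≤ k) (hc : 2 ≤ c)
    (h : ∀ χ : ℕ → Fin c, hasMonoAP c k n χ) :
    (k : ℤ) ≤ ⌈Real.logb c ((n : ℝ) ^ 2 / k)⌉ + 1 := by
  have hcount := sub_one_mul_pow_le_of_forall_hasMonoAP (by omega) hk h
  refine le_ceil_logb_add_one (by exact_mod_cast hc) hk ?_
  rw [lt_div_iff₀ (by positivity), mul_comm]
  exact_mod_cast mul_pow_sub_two_lt_sq hc hk hcount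
end

section
/- For k ≥ 4 and c = 2, the van der Waerden number satisfies w(k;2) > 2^(k−4)/k · (k−1)/k. -/
open Finset

section LocalLemma

variable {α ι : Type*} [Fintype α] [DecidableEq α] [DecidableEq ι] (B : ι → Finset α)

theorem card_compl_biUnion_insert (t : ι) (T : Finset ι) :
    #((insert t T).biUnion B)ᶜ + #((T.biUnion B)ᶜ ∩ B t) = #(T.biUnion B)ᶜ := by
  rw [biUnion_insert, compl_union, inter_comm, ← sdiff_eq_inter_compl,
    card_sdiff_add_card_inter]

theorem card_compl_biUnion_le_add_sum {T U V : Finset ι} (hT : T ⊆ U ∪ V) :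
    #(U.biUnion B)ᶜ ≤ #(T.biUnion B)ᶜ + ∑ t ∈ V, #((U.biUnion B)ᶜ ∩ B t) := by
  calc #(U.biUnion B)ᶜ
      ≤ #((T.biUnion B)ᶜ ∪ V.biUnion fun t => (U.biUnion B)ᶜ ∩ B t) := by
        refine card_le_card fun x hx => ?_
        simp only [mem_union, mem_compl, mem_biUnion, mem_inter, not_exists, not_and] at hx ⊢
        by_contra! h
        obtain ⟨t, ht, hxt⟩ := h.1
        rcases mem_union.mp (hT ht) with htU | htV
        · exact hx t htU hxt
        · exact h.2 t htV hx hxt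
    _ ≤ _ := (card_union_le _ _).trans (Nat.add_le_add_left card_biUnion_le _)

variable {B} {dep : ι → ι → Prop} [DecidableRel dep] {I : Finset ι} {p : ℝ}
  {D : ℕ}

theorem card_compl_biUnion_inter_le (hp : 0 ≤ p) (hpD : 4 * p * D ≤ 1)
    (hindep : ∀ s ∈ I, ∀ T ⊆ I, (∀ t ∈ T, ¬ dep t s) →
      (#((T.biUnion B)ᶜ ∩ B s) : ℝ) ≤ p * #(T.biUnion B)ᶜ)
    (hdeg : ∀ s ∈ I, #{t ∈ I | dep t s} ≤ D) {T : Finset ι} (hT : T ⊆ I) {s : ι}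
    (hs : s ∈ I) : (#((T.biUnion B)ᶜ ∩ B s) : ℝ) ≤ 2 * p * #(T.biUnion B)ᶜ := by
  induction T using Finset.strongInduction generalizing s with
  | H T ih =>
  set T₂ := {t ∈ T | ¬ dep t s}
  have hT₂ : T₂ ⊆ T := filter_subset _ _
  have hnbr : ∀ t ∈ {t ∈ T | dep t s},
      (#((T₂.biUnion B)ᶜ ∩ B t) : ℝ) ≤ 2 * p * #(T₂.biUnion B)ᶜ := fun t ht => by
    rw [mem_filter] at ht
    refine ih T₂ (ssubset_of_subset_of_ne hT₂ fun h => ?_) (hT₂.trans hT) (hT ht.1)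
    exact (mem_filter.mp (h ▸ ht.1 : t ∈ T₂)).2 ht.2
  have hdegT : (#{t ∈ T | dep t s} : ℝ) ≤ D :=
    mod_cast (card_le_card (filter_subset_filter _ hT)).trans (hdeg s hs)
  -- Removing the at most `D` events that depend on `s` loses at most half of the outcomes.
  have hhalf : (#(T₂.biUnion B)ᶜ : ℝ) ≤ 2 * #(T.biUnion B)ᶜ := by
    have hunion : (#(T₂.biUnion B)ᶜ : ℝ)
        ≤ #(T.biUnion B)ᶜ + ∑ t ∈ T with dep t s, (#((T₂.biUnion B)ᶜ ∩ B t) : ℝ) :=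
      mod_cast card_compl_biUnion_le_add_sum B
        (by rw [union_comm, filter_union_filter_not_eq])
    have hsum := sum_le_sum hnbr
    rw [sum_const, nsmul_eq_mul] at hsum
    have : (#{t ∈ T | dep t s} : ℝ) * (2 * p * #(T₂.biUnion B)ᶜ)
        ≤ 1 / 2 * #(T₂.biUnion B)ᶜ := by
      calc _ ≤ (D : ℝ) * (2 * p * #(T₂.biUnion B)ᶜ) := by gcongr
        _ ≤ 1 / 2 * #(T₂.biUnion B)ᶜ := by nlinarith
    linarith
  calc (#((T.biUnion B)ᶜ ∩ B s) : ℝ)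
      ≤ #((T₂.biUnion B)ᶜ ∩ B s) := by
        gcongr
    _ ≤ p * #(T₂.biUnion B)ᶜ :=
        hindep s hs T₂ (hT₂.trans hT) fun t ht => (mem_filter.mp ht).2
    _ ≤ 2 * p * #(T.biUnion B)ᶜ := by nlinarith

theorem exists_forall_notMem_of_local [Nonempty α] (hp : 0 ≤ p) (h2p : 2 * p < 1)
    (hpD : 4 * p * D ≤ 1)
    (hindep : ∀ s ∈ I, ∀ T ⊆ I, (∀ t ∈ T, ¬ dep t s) →
      (#((T.biUnion B)ᶜ ∩ B s) : ℝ) ≤ p * #(T.biUnion B)ᶜ)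
    (hdeg : ∀ s ∈ I, #{t ∈ I | dep t s} ≤ D) : ∃ x, ∀ i ∈ I, x ∉ B i := by
  suffices ∀ T ⊆ I, 0 < #(T.biUnion B)ᶜ by
    obtain ⟨x, hx⟩ := card_pos.mp (this I subset_rfl)
    exact ⟨x, fun i hi hxi => mem_compl.mp hx (mem_biUnion.mpr ⟨i, hi, hxi⟩)⟩
  intro T hT
  induction T using Finset.induction_on with
  | empty => simp [card_univ, Fintype.card_pos]
  | insert t T ht ih =>
    have hsplit : (#((insert t T).biUnion B)ᶜ : ℝ) + #((T.biUnion B)ᶜ ∩ B t)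
        = #(T.biUnion B)ᶜ := mod_cast card_compl_biUnion_insert B t T
    have hbad := card_compl_biUnion_inter_le hp hpD hindep hdeg
      ((subset_insert t T).trans hT) (hT (mem_insert_self t T))
    have hpos : (0 : ℝ) < #(T.biUnion B)ᶜ := mod_cast ih ((subset_insert t T).trans hT)
    have : (0 : ℝ) < #((insert t T).biUnion B)ᶜ := by nlinarith
    exact_mod_cast this

end LocalLemma

section Product

variable {X β : Type*} [Fintype X] [DecidableEq X] [DecidableEq β]

theorem map_filter_restrict_mem {S : Finset X} {G : Finset (X → β)}
    (hG : ∀ χ ∈ G, ∀ ψ, (∀ x ∉ S, ψ x = χ x) → ψ ∈ G) (E : Finset (S → β)) :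
    {χ ∈ G | χ ∘ (↑) ∈ E}.map (Equiv.piEquivPiSubtypeProd (· ∈ S) _).toEmbedding
      = E ×ˢ G.image fun χ => (Equiv.piEquivPiSubtypeProd (· ∈ S) _ χ).2 := by
  set e := Equiv.piEquivPiSubtypeProd (· ∈ S) fun _ => β
  ext ⟨f, g⟩
  have hf : e.symm (f, g) ∘ (↑) = f := congrArg Prod.fst (e.apply_symm_apply (f, g))
  simp only [mem_map_equiv, mem_filter, mem_product, mem_image, hf]
  constructor
  · rintro ⟨hG', hE⟩
    exact ⟨hE, _, hG', congrArg Prod.snd (e.apply_symm_apply (f, g))⟩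
  · rintro ⟨hE, χ, hχ, rfl⟩
    refine ⟨hG χ hχ _ fun x hx => ?_, hE⟩
    simp [e, Equiv.piEquivPiSubtypeProd_symm_apply, hx]

theorem card_filter_restrict_mem_mul [Fintype β] {S : Finset X} {G : Finset (X → β)}
    (hG : ∀ χ ∈ G, ∀ ψ, (∀ x ∉ S, ψ x = χ x) → ψ ∈ G) (E : Finset (S → β)) :
    #{χ ∈ G | χ ∘ (↑) ∈ E} * Fintype.card β ^ #S = #G * #E := by
  have hE := congrArg card (map_filter_restrict_mem hG E)
  have hG := congrArg card (map_filter_restrict_mem hG univ)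
  simp only [card_map, card_product, card_univ, Fintype.card_fun, Fintype.card_coe,
    mem_univ, filter_true] at hE hG
  rw [hE, hG]
  ring

theorem exists_forall_restrict_notMem [Fintype β] [Nonempty β] {ι : Type*} [DecidableEq ι]
    {I : Finset ι} (S : ι → Finset X) (E : ∀ i, Finset (S i → β)) {p : ℝ} {D : ℕ}
    (hp : 0 ≤ p) (h2p : 2 * p < 1) (hpD : 4 * p * D ≤ 1)
    (hE : ∀ i ∈ I, (#(E i) : ℝ) ≤ p * Fintype.card β ^ #(S i))
    (hdeg : ∀ i ∈ I, #{j ∈ I | ¬ Disjoint (S j) (S i)} ≤ D) :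
    ∃ χ : X → β, ∀ i ∈ I, χ ∘ (↑) ∉ E i := by
  set B : ι → Finset (X → β) := fun i => {χ | χ ∘ (↑) ∈ E i}
  have hindep : ∀ s ∈ I, ∀ T ⊆ I, (∀ t ∈ T, ¬ ¬ Disjoint (S t) (S s)) →
      (#((T.biUnion B)ᶜ ∩ B s) : ℝ) ≤ p * #(T.biUnion B)ᶜ := by
    intro s hs T _ hT
    have hG : ∀ χ ∈ (T.biUnion B)ᶜ, ∀ ψ, (∀ x ∉ S s, ψ x = χ x) → ψ ∈ (T.biUnion B)ᶜ := by
      intro χ hχ ψ hψ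
      simp only [mem_compl, mem_biUnion, not_exists, not_and, B, mem_filter, mem_univ,
        true_and] at hχ ⊢
      intro t ht
      convert hχ t ht using 2
      funext x
      exact hψ x (disjoint_left.mp (not_not.mp (hT t ht)) x.2)
    have hmul := card_filter_restrict_mem_mul hG (E s)
    have hfilter : {χ ∈ (T.biUnion B)ᶜ | χ ∘ (↑) ∈ E s} = (T.biUnion B)ᶜ ∩ B s := by
      ext; simp [B]
    rw [hfilter] at hmul
    have hpos : (0 : ℝ) < Fintype.card β ^ #(S s) := by positivity
    have : (#((T.biUnion B)ᶜ ∩ B s) : ℝ) * Fintype.card β ^ #(S s)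
        ≤ p * #(T.biUnion B)ᶜ * Fintype.card β ^ #(S s) := by
      rw [← Nat.cast_pow, ← Nat.cast_mul, hmul, Nat.cast_mul, Nat.cast_pow]
      nlinarith [hE s hs]
    exact le_of_mul_le_mul_right this hpos
  obtain ⟨χ, hχ⟩ := exists_forall_notMem_of_local hp h2p hpD hindep hdeg
  exact ⟨χ, fun i hi => by simpa [B] using hχ i hi⟩

end Product

theorem exists_forall_hasMonoAP (c : ℕ) {k : ℕ} (hk : 1 ≤ k) :
    ∃ n, ∀ χ : ℕ → Fin c, hasMonoAP c k n χ := by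
  obtain ⟨ι, _, hHJ⟩ := Combinatorics.Line.exists_mono_in_high_dimension (Fin k) (Fin c)
  refine ⟨1 + Fintype.card ι * (k - 1), fun χ => ?_⟩
  obtain ⟨l, col, hl⟩ := hHJ fun v => χ (1 + ∑ i, (v i : ℕ))
  set x₀ : Fin k := ⟨0, hk⟩
  set d := #{i | l.idxFun i = none}
  -- Summing coordinates maps the combinatorial line to an AP whose difference `d` is the
  -- number of moving coordinates.
  have hsum : ∀ x : Fin k, ∑ i, (l x i : ℕ) = ∑ i, (l x₀ i : ℕ) + x * d := by
    intro x
    have hcoord : ∀ i, (l x i : ℕ) = l x₀ i + if l.idxFun i = none then (x : ℕ) else 0 := by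
      intro i
      cases h : l.idxFun i <;> simp [h, x₀]
    rw [sum_congr rfl fun i _ => hcoord i, sum_add_distrib, sum_ite, sum_const_zero, add_zero,
      sum_const, smul_eq_mul, mul_comm]
  have hbound : ∀ x : Fin k, ∑ i, (l x i : ℕ) ≤ Fintype.card ι * (k - 1) := fun x =>
    calc ∑ i, (l x i : ℕ) ≤ ∑ _i : ι, (k - 1) :=
          sum_le_sum fun i _ => Nat.le_sub_one_of_lt (l x i).isLt
      _ = Fintype.card ι * (k - 1) := by simp
  have hd : 1 ≤ d := card_pos.mpr ⟨l.proper.choose, by simpa using l.proper.choose_spec⟩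
  refine ⟨1 + ∑ i, (l x₀ i : ℕ), d, by omega, hd, ?_, fun i hi => ?_⟩
  · have := hbound ⟨k - 1, by omega⟩
    rw [hsum] at this
    simp only at this
    linarith [mul_comm d (k - 1)]
  · have hi : χ (1 + ∑ j, (l ⟨i, hi⟩ j : ℕ)) = col := hl ⟨i, hi⟩
    rw [hsum] at hi
    rw [add_assoc, hi, ← hl x₀]

theorem hasMonoAP_vdW (c : ℕ) {k : ℕ} (hk : 1 ≤ k) (χ : ℕ → Fin c) :
    hasMonoAP c k (vdW k c) χ :=
  Nat.sInf_mem (exists_forall_hasMonoAP c hk) χ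

section Progressions

open Fin.NatCast

variable {k n : ℕ}

-- `(a, d)` stands for the progression `a, a + d, …, a + (k - 1) d`; colourings of `{1, …, n}`
-- are functions on `Fin (n + 1)`, whose point `0` plays no role.
def progressions (k n : ℕ) : Finset (ℕ × ℕ) :=
  {s ∈ Icc 1 n ×ˢ Icc 1 n | s.1 + (k - 1) * s.2 ≤ n}

def apSupport (k n : ℕ) (s : ℕ × ℕ) : Finset (Fin (n + 1)) :=
  (range k).image fun i => ((s.1 + i * s.2 : ℕ) : Fin (n + 1))

theorem mem_progressions (hk : 2 ≤ k) {s : ℕ × ℕ} :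
    s ∈ progressions k n ↔ 1 ≤ s.1 ∧ 1 ≤ s.2 ∧ s.1 + (k - 1) * s.2 ≤ n := by
  simp only [progressions, mem_filter, mem_product, mem_Icc]
  constructor
  · rintro ⟨⟨⟨ha, -⟩, hd, -⟩, h⟩
    exact ⟨ha, hd, h⟩
  · rintro ⟨ha, hd, h⟩
    have : s.2 ≤ (k - 1) * s.2 := Nat.le_mul_of_pos_left _ (by omega)
    exact ⟨⟨⟨ha, by omega⟩, hd, by omega⟩, h⟩

theorem add_mul_le_of_mem_progressions {s : ℕ × ℕ} (hs : s ∈ progressions k n) {i : ℕ}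
    (hi : i < k) : s.1 + i * s.2 ≤ n := by
  have : i * s.2 ≤ (k - 1) * s.2 := Nat.mul_le_mul_right _ (by omega)
  have := (mem_filter.mp hs).2
  omega

theorem natCast_injOn_Iic : Set.InjOn (Nat.cast : ℕ → Fin (n + 1)) (Set.Iic n) :=
  fun a ha b hb h => by
    simpa [Fin.val_cast_of_lt (Nat.lt_succ_of_le ha), Fin.val_cast_of_lt (Nat.lt_succ_of_le hb)]
      using congrArg Fin.val h

theorem card_apSupport {s : ℕ × ℕ} (hs : s ∈ progressions k n) : #(apSupport k n s) = k := by
  rw [apSupport, card_image_of_injOn, card_range]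
  intro i hi j hj hij
  have hd : 0 < s.2 := by simp only [progressions, mem_filter, mem_product, mem_Icc] at hs; omega
  have := natCast_injOn_Iic (add_mul_le_of_mem_progressions hs (mem_range.mp hi))
    (add_mul_le_of_mem_progressions hs (mem_range.mp hj)) hij
  exact Nat.eq_of_mul_eq_mul_right hd (by omega)

theorem card_filter_not_disjoint_apSupport_le (hk : 2 ≤ k) {s : ℕ × ℕ}
    (hs : s ∈ progressions k n) :
    #{t ∈ progressions k n | ¬ Disjoint (apSupport k n t) (apSupport k n s)}
      ≤ k * k * (n / (k - 1)) := by
  -- A progression meeting `s` is determined by its difference and by which terms of `s` and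
  -- of itself coincide.
  calc _ ≤ #((range k ×ˢ range k ×ˢ Icc 1 (n / (k - 1))).image
          fun q => (s.1 + q.1 * s.2 - q.2.1 * q.2.2, q.2.2)) := card_le_card ?_
    _ ≤ k * k * (n / (k - 1)) := card_image_le.trans (by simp [mul_assoc])
  intro t ht
  obtain ⟨htI, hst⟩ := mem_filter.mp ht
  obtain ⟨x, hxt, hxs⟩ := not_disjoint_iff.mp hst
  obtain ⟨j, hj, rfl⟩ := mem_image.mp hxt
  obtain ⟨i, hi, hij⟩ := mem_image.mp hxs
  have hij := natCast_injOn_Iic (add_mul_le_of_mem_progressions hs (mem_range.mp hi))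
    (add_mul_le_of_mem_progressions htI (mem_range.mp hj)) hij
  obtain ⟨-, hd, hlen⟩ := (mem_progressions hk).mp htI
  refine mem_image.mpr ⟨(i, j, t.2), mem_product.mpr ⟨hi, mem_product.mpr ⟨hj, ?_⟩⟩, ?_⟩
  · refine mem_Icc.mpr ⟨hd, (Nat.le_div_iff_mul_le (by omega)).mpr ?_⟩
    linarith [mul_comm t.2 (k - 1)]
  · simp [hij]

theorem exists_not_hasMonoAP (hk : 3 ≤ k) (h : 8 * k ^ 2 * n ≤ 2 ^ k * (k - 1)) :
    ∃ χ : ℕ → Fin 2, ¬ hasMonoAP 2 k n χ := by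
  set D := k * k * (n / (k - 1))
  have hD : 8 * D ≤ 2 ^ k := by
    have : n / (k - 1) * (k - 1) ≤ n := Nat.div_mul_le_self n (k - 1)
    refine Nat.le_of_mul_le_mul_right ?_ (by omega : 0 < k - 1)
    calc 8 * D * (k - 1) = 8 * k ^ 2 * (n / (k - 1) * (k - 1)) := by ring
      _ ≤ 2 ^ k * (k - 1) := le_trans (by gcongr) h
  have h2k : (8 : ℝ) ≤ 2 ^ k := by
    exact_mod_cast (Nat.pow_le_pow_right two_pos hk : 2 ^ 3 ≤ 2 ^ k)
  have hD' : (8 : ℝ) * D ≤ 2 ^ k := mod_cast hD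
  set E : ∀ s, Finset (apSupport k n s → Fin 2) := fun _ => univ.image fun c _ => c
  have hE : ∀ s ∈ progressions k n,
      (#(E s) : ℝ) ≤ 2 / 2 ^ k * Fintype.card (Fin 2) ^ #(apSupport k n s) := fun s hs => by
    rw [card_apSupport hs, Fintype.card_fin, Nat.cast_ofNat, div_mul_cancel₀ _ (by positivity)]
    exact_mod_cast card_image_le.trans (by simp)
  obtain ⟨χ, hχ⟩ := exists_forall_restrict_notMem (apSupport k n) E (by positivity)
    (by rw [← mul_div_assoc, div_lt_one (by positivity)]; linarith)
    (by rw [show 4 * (2 / 2 ^ k) * (D : ℝ) = 8 * D / 2 ^ k by ring, div_le_one (by positivity)]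
        exact hD')
    hE fun s hs => card_filter_not_disjoint_apSupport_le (by omega) hs
  refine ⟨fun m => χ m, ?_⟩
  rintro ⟨a, d, ha, hd, hlen, hmono⟩
  refine hχ (a, d) ((mem_progressions (by omega)).mpr ⟨ha, hd, hlen⟩)
    (mem_image.mpr ⟨χ a, mem_univ _, ?_⟩)
  funext ⟨x, hx⟩
  obtain ⟨i, hi, rfl⟩ := mem_image.mp hx
  exact (hmono i (mem_range.mp hi)).symm

end Progressions

/-- For k ≥ 4, the 2-color van der Waerden number satisfies
w(k;2) > 2^(k-4)/k · (k-1)/k. -/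
theorem vdW_two_color_lower (k : ℕ) (hk : 4 ≤ k) :
    (2 : ℝ) ^ (k - 4) / k * (((k : ℝ) - 1) / k) < (vdW k 2 : ℝ) := by
  by_contra! h
  have hkR : (4 : ℝ) ≤ k := mod_cast hk
  have hpow : (2 : ℝ) ^ k = 2 ^ 4 * 2 ^ (k - 4) := by rw [← pow_add, Nat.add_sub_cancel' hk]
  have hsq : (k : ℝ) ^ 2 * vdW k 2 ≤ 2 ^ (k - 4) * (k - 1) := by
    rw [div_mul_div_comm, le_div_iff₀ (by positivity)] at h
    linarith
  have hn : 8 * k ^ 2 * vdW k 2 ≤ 2 ^ k * (k - 1) := by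
    rw [← Nat.cast_le (α := ℝ)]
    push_cast [Nat.cast_sub (by omega : 1 ≤ k)]
    nlinarith [pow_pos (two_pos (α := ℝ)) (k - 4)]
  obtain ⟨χ, hχ⟩ := exists_not_hasMonoAP (by omega) hn
  exact hχ (hasMonoAP_vdW 2 (by omega) χ)
end
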